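/- Correctness of one step of the DEIM greedy index-selection algorithm: let ψ₁,…,ψ_{k-1}, ψ_k ∈ ℝⁿ, let ℘₁,…,℘_{k-1} ∈ {1,…,n} be indices such that the (k−1)×(k−1) matrix M with entries M_{ij} = (ψ_j)_{℘ᵢ} is invertible, let w ∈ ℝ^{k-1} be the solution of M w = ((ψ_k)_{℘₁},…,(ψ_k)_{℘_{k-1}})ᵀ, and set the residual r = ψ_k − Σ_{j=1}^{k-1} w_j ψ_j. Then: (a) if ψ_k does not lie in the span of ψ₁,…,ψ_{k-1}, then r ≠ 0 (so the algorithm's selection of a new index ℘_k with |r_{℘_k}| maximal picks a component where r_{℘_k} ≠ 0); and (b) for any index ℘_k with r_{℘_k} ≠ 0, the k×k matrix with entries (ψ_j)_{℘ᵢ}, i, j = 1,…,k, is invertible. -/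
import Mathlib


open Matrix

/-- Correctness of one step of the DEIM greedy index selection: given previous basis
vectors `ψ 0, …, ψ (k-1)` (here indexed by `Fin k`), indices `℘` with invertible
interpolation matrix `M`, the solution `w` of `M w = Pᵀ ψₖ`, and the residual
`r = ψₖ − Σⱼ wⱼ ψⱼ`, then (a) if `ψₖ` is not in the span of the previous vectors
the residual is nonzero, and (b) appending any index `℘ₖ` where `r ℘ₖ ≠ 0` keeps
the enlarged interpolation matrix invertible. -/
theorem stmt_5 (n k : ℕ) (ψ : Fin k → Fin n → ℝ) (ψk : Fin n → ℝ)
    (℘ : Fin k → Fin n)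
    (M : Matrix (Fin k) (Fin k) ℝ) (hM : ∀ i j, M i j = ψ j (℘ i))
    (hMinv : IsUnit M)
    (w : Fin k → ℝ) (hw : M *ᵥ w = fun i => ψk (℘ i))
    (r : Fin n → ℝ) (hr : r = ψk - ∑ j, w j • ψ j) :
    (ψk ∉ Submodule.span ℝ (Set.range ψ) → r ≠ 0) ∧
      (∀ ℘k : Fin n, r ℘k ≠ 0 →
        IsUnit (Matrix.of fun i j : Fin (k + 1) =>
          (Fin.snoc ψ ψk : Fin (k + 1) → Fin n → ℝ) j
            ((Fin.snoc ℘ ℘k : Fin (k + 1) → Fin n) i))) := by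
  constructor
  · intro hspan hr0
    apply hspan
    have : ψk = ∑ j, w j • ψ j := by
      have := hr ▸ hr0
      have h := sub_eq_zero.mp this
      exact h
    rw [this]
    exact Submodule.sum_mem _ fun j _ =>
      Submodule.smul_mem _ _ (Submodule.subset_span ⟨j, rfl⟩)
  · intro ℘k hrk
    set M' : Matrix (Fin (k + 1)) (Fin (k + 1)) ℝ :=
      Matrix.of fun i j : Fin (k + 1) =>
        (Fin.snoc ψ ψk : Fin (k + 1) → Fin n → ℝ) j
          ((Fin.snoc ℘ ℘k : Fin (k + 1) → Fin n) i) with hM'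
    rw [← Matrix.mulVec_injective_iff_isUnit]
    intro v₁ v₂ hv
    have hsub : M' *ᵥ (v₁ - v₂) = 0 := by
      rw [Matrix.mulVec_sub, hv, sub_self]
    set v := v₁ - v₂ with hvdef
    suffices hv0 : v = 0 by
      exact sub_eq_zero.mp hv0
    -- components
    set cl : ℝ := v (Fin.last k) with hcl
    set c : Fin k → ℝ := fun j => v j.castSucc with hc
    have key : ∀ p : Fin n,
        (M' *ᵥ v) = (fun i => ∑ j : Fin k, ψ j ((Fin.snoc ℘ ℘k : Fin (k+1) → Fin n) i) * c j
          + ψk ((Fin.snoc ℘ ℘k : Fin (k+1) → Fin n) i) * cl) := by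
      intro p
      funext i
      simp only [hM', Matrix.mulVec, dotProduct, Matrix.of_apply]
      rw [Fin.sum_univ_castSucc]
      simp [Fin.snoc_castSucc, Fin.snoc_last, hc, hcl]
    have key' := key ℘k
    -- first k rows
    have hMc : M *ᵥ c = M *ᵥ ((-cl) • w) := by
      funext i
      have h0 : (M' *ᵥ v) i.castSucc = 0 := by rw [hsub]; rfl
      rw [key'] at h0
      simp only [Fin.snoc_castSucc] at h0
      have hMw := congrFun hw i
      simp only [Matrix.mulVec, dotProduct] at hMw ⊢
      simp only [hM] at hMw ⊢
      simp only [Pi.smul_apply, smul_eq_mul]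
      have h1 : ∑ j, ψ j (℘ i) * c j = -(cl * ψk (℘ i)) := by linarith
      calc ∑ x, ψ x (℘ i) * c x = -(cl * (∑ x, ψ x (℘ i) * w x)) := by
            rw [h1, hMw]
        _ = ∑ x, ψ x (℘ i) * (-cl * w x) := by
            rw [Finset.mul_sum, ← Finset.sum_neg_distrib]
            exact Finset.sum_congr rfl fun x _ => by ring
    have hcw : c = (-cl) • w :=
      (Matrix.mulVec_injective_iff_isUnit.mpr hMinv) hMc
    -- last row
    have hlast : (M' *ᵥ v) (Fin.last k) = 0 := by rw [hsub]; rfl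
    rw [key'] at hlast
    simp only [Fin.snoc_last] at hlast
    have hrval : r ℘k = ψk ℘k - ∑ j, w j * ψ j ℘k := by
      rw [hr]
      simp [Finset.sum_apply]
    have hcl0 : cl = 0 := by
      rw [hcw] at hlast
      simp only [Pi.smul_apply, smul_eq_mul] at hlast
      have h2 : ∑ x, ψ x ℘k * (-cl * w x) = -(cl * ∑ x, w x * ψ x ℘k) := by
        rw [Finset.mul_sum, ← Finset.sum_neg_distrib]
        exact Finset.sum_congr rfl fun x _ => by ring
      rw [h2] at hlast
      have : cl * (ψk ℘k - ∑ j, w j * ψ j ℘k) = 0 := by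
        rw [mul_sub]
        linarith
      rcases mul_eq_zero.mp this with h | h
      · exact h
      · exact absurd (hrval ▸ h) hrk
    funext i
    refine Fin.lastCases ?_ ?_ i
    · exact hcl0
    · intro j
      have := congrFun hcw j
      rw [hcl0] at this
      simpa using this
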